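/- For any convex body C ⊂ S^d with diam(C) > π/2, the maximum of width_K(C) over all hemispheres K supporting C is at most diam(C). Consequently, for an arbitrary convex body C ⊂ S^d we have Δ(C) ≤ diam(C). -/

import Mathlib

open Set Metric
open scoped RealInnerProductSpace

noncomputable section

/-- Euclidean space `E^{d+1}`. -/
abbrev E (d : ℕ) := EuclideanSpace ℝ (Fin (d + 1))

/-- The unit sphere `S^d ⊆ E^{d+1}`. -/
def Sph (d : ℕ) : Set (E d) := Metric.sphere (0 : E d) 1

variable {d : ℕ}

/-- Geodesic (angular) distance on the unit sphere. -/
def sdist (x y : E d) : ℝ := Real.arccos ⟪x, y⟫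

/-- Closed hemisphere with center `p`. -/
def Hemi (p : E d) : Set (E d) := {x ∈ Sph d | 0 ≤ ⟪p, x⟫}

/-- Open hemisphere with center `p`. -/
def openHemi (p : E d) : Set (E d) := {x ∈ Sph d | 0 < ⟪p, x⟫}

/-- Boundary great subsphere of the hemisphere with center `p`. -/
def bdHemi (p : E d) : Set (E d) := {x ∈ Sph d | ⟪p, x⟫ = 0}

/-- Spherical convexity: no antipodal pairs, and the nonnegative cone over the
set is convex (equivalent to being closed under shorter arcs). -/
def SphConvex (C : Set (E d)) : Prop :=
  (∀ x ∈ C, -x ∉ C) ∧ Convex ℝ {v : E d | ∃ r : ℝ, 0 ≤ r ∧ ∃ x ∈ C, v = r • x}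

/-- Spherical convex hull: the smallest spherically convex subset of the
sphere containing `A`. -/
def sConvHull (A : Set (E d)) : Set (E d) := ⋂₀ {C | SphConvex C ∧ C ⊆ Sph d ∧ A ⊆ C}

/-- Interior of `C` relative to the sphere. -/
def sInterior (C : Set (E d)) : Set (E d) :=
  {x ∈ Sph d | ∃ ε > 0, Metric.ball x ε ∩ Sph d ⊆ C}

/-- A spherical convex body: closed, spherically convex, with nonempty
interior relative to the sphere. -/
def IsBody (C : Set (E d)) : Prop :=
  C ⊆ Sph d ∧ IsClosed C ∧ SphConvex C ∧ (sInterior C).Nonempty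

/-- Spherical ball of radius `r` centered at `p`. -/
def sBall (p : E d) (r : ℝ) : Set (E d) := {x ∈ Sph d | sdist p x ≤ r}

/-- Normalization of a vector. -/
def nrm (v : E d) : E d := ‖v‖⁻¹ • v

/-- The center of the `(d-1)`-dimensional hemisphere `bd(G) ∩ H`, where `G`, `H`
are the hemispheres centered at `g`, `h`. -/
def cGH (g h : E d) : E d := nrm (h - ⟪g, h⟫ • g)

/-- Thickness of the lune `Hemi g ∩ Hemi h`: the geodesic distance between the
centers of its two bounding `(d-1)`-dimensional hemispheres. -/
def lthick (g h : E d) : ℝ := Real.pi - sdist g h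

/-- The hemisphere centered at `k` supports `C`. -/
def Supports (k : E d) (C : Set (E d)) : Prop :=
  C ⊆ Hemi k ∧ (bdHemi k ∩ C).Nonempty

/-- Width of `C` determined by a supporting hemisphere centered at `k`:
minimal thickness of a lune `K ∩ K*` over supporting hemispheres `K* ≠ K`. -/
def width (C : Set (E d)) (k : E d) : ℝ :=
  sInf {w | ∃ k' ∈ Sph d, k' ≠ k ∧ k' ≠ -k ∧ Supports k' C ∧ w = lthick k k'}

/-- Thickness of `C`: minimal thickness of a lune containing `C`. -/
def thick (C : Set (E d)) : ℝ :=
  sInf {w | ∃ g ∈ Sph d, ∃ h ∈ Sph d, g ≠ h ∧ g ≠ -h ∧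
    C ⊆ Hemi g ∩ Hemi h ∧ w = lthick g h}

/-- Spherical diameter of a set. -/
def sdiam (C : Set (E d)) : ℝ := sSup {r | ∃ x ∈ C, ∃ y ∈ C, r = sdist x y}

/-- Reduced spherical convex body. -/
def Reduced (R : Set (E d)) : Prop :=
  IsBody R ∧ ∀ Z : Set (E d), IsBody Z → Z ⊆ R → Z ≠ R → thick Z < thick R

/-- Extreme point of a spherical convex body. -/
def ExtremePt (C : Set (E d)) (e : E d) : Prop := e ∈ C ∧ SphConvex (C \ {e})

/-! If `q ∈ C` is farthest from `p ∈ C`, the hemisphere centred at `cGH q p`, the unit vector in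
direction `p - ⟪p, q⟫ q`, supports `C` at `q`: moving from `q` towards any `z ∈ C` cannot bring us
farther from `p`, and to first order this says `⟪p, q⟫ ⟪q, z⟫ ≤ ⟪p, z⟫`.

If `K` supports `C` at `p`, this hemisphere `K'` meets `K` in a lune of thickness at most
`max (π / 2) (sdist p q)`, which is at most `diam C` once `diam C > π / 2`. For a diametral pair
`x, y` the two hemispheres obtained at `x` and at `y` bound a lune of thickness exactly `diam C`. -/

open Real

lemma mem_Sph {x : E d} : x ∈ Sph d ↔ ‖x‖ = 1 := mem_sphere_zero_iff_norm

lemma neg_mem_Sph {x : E d} (hx : x ∈ Sph d) : -x ∈ Sph d := by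
  rwa [mem_Sph, norm_neg, ← mem_Sph]

lemma cos_sdist {x y : E d} (hx : x ∈ Sph d) (hy : y ∈ Sph d) : cos (sdist x y) = ⟪x, y⟫ :=
  cos_arccos (neg_one_le_real_inner_of_norm_eq_one (mem_Sph.1 hx) (mem_Sph.1 hy))
    (real_inner_le_one_of_norm_eq_one (mem_Sph.1 hx) (mem_Sph.1 hy))

lemma sdist_comm (x y : E d) : sdist x y = sdist y x := by
  rw [sdist, sdist, real_inner_comm]

lemma inner_le_inner_of_sdist_le {x y z : E d} (hx : x ∈ Sph d) (hy : y ∈ Sph d)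
    (hz : z ∈ Sph d) (h : sdist x z ≤ sdist x y) : ⟪x, y⟫ ≤ ⟪x, z⟫ := by
  rw [← cos_sdist hx hy, ← cos_sdist hx hz]
  exact cos_le_cos_of_nonneg_of_le_pi (arccos_nonneg _) (arccos_le_pi _) h

lemma lthick_nonneg (g h : E d) : 0 ≤ lthick g h := sub_nonneg.2 (arccos_le_pi _)

lemma lthick_le_of_inner_le_neg_cos {g h : E d} {δ : ℝ} (hδ₀ : 0 ≤ δ) (hδπ : δ ≤ π)
    (hgh : ⟪g, h⟫ ≤ -cos δ) : lthick g h ≤ δ := by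
  have := arccos_le_arccos hgh
  rw [arccos_neg, arccos_cos hδ₀ hδπ] at this
  rw [lthick, sdist]
  linarith

lemma ne_and_ne_neg_of_abs_inner_lt_one {k k' : E d} (hk : k ∈ Sph d) (h : |⟪k, k'⟫| < 1) :
    k' ≠ k ∧ k' ≠ -k := by
  have hkk := inner_self_eq_one_of_norm_eq_one (𝕜 := ℝ) (mem_Sph.1 hk)
  constructor <;> rintro rfl
  · rw [hkk, abs_one] at h
    exact lt_irrefl _ h
  · rw [inner_neg_right, hkk, abs_neg, abs_one] at h
    exact lt_irrefl _ h

lemma sdiam_nonneg (C : Set (E d)) : 0 ≤ sdiam C :=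
  Real.sSup_nonneg (by rintro _ ⟨x, -, y, -, rfl⟩; exact arccos_nonneg _)

lemma sdiam_le_pi (C : Set (E d)) : sdiam C ≤ π :=
  Real.sSup_le (by rintro _ ⟨x, -, y, -, rfl⟩; exact arccos_le_pi _) pi_pos.le

lemma sdist_le_sdiam {C : Set (E d)} {x y : E d} (hx : x ∈ C) (hy : y ∈ C) :
    sdist x y ≤ sdiam C :=
  le_csSup ⟨π, by rintro _ ⟨x, -, y, -, rfl⟩; exact arccos_le_pi _⟩ ⟨x, hx, y, hy, rfl⟩

lemma IsCompact.exists_sdist_eq_sdiam {C : Set (E d)} (hC : IsCompact C) (hne : C.Nonempty) :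
    ∃ x ∈ C, ∃ y ∈ C, sdist x y = sdiam C := by
  have hcont : Continuous fun u : E d × E d => sdist u.1 u.2 :=
    continuous_arccos.comp continuous_inner
  obtain ⟨⟨x, y⟩, ⟨hx, hy⟩, hmax⟩ := (hC.prod hC).exists_isMaxOn (hne.prod hne) hcont.continuousOn
  refine ⟨x, hx, y, hy, le_antisymm (sdist_le_sdiam hx hy)
    (csSup_le ⟨sdist x y, x, hx, y, hy, rfl⟩ ?_)⟩
  rintro _ ⟨z, hz, w, hw, rfl⟩
  exact isMaxOn_iff.1 hmax (z, w) (mk_mem_prod hz hw)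

lemma isMinOn_inner_of_sdist_eq_sdiam {C : Set (E d)} (hCs : C ⊆ Sph d) {x y : E d}
    (hx : x ∈ C) (hy : y ∈ C) (hxy : sdist x y = sdiam C) : IsMinOn (⟪x, ·⟫) C y :=
  fun _ hz => inner_le_inner_of_sdist_le (hCs hx) (hCs hy) (hCs hz) (hxy ▸ sdist_le_sdiam hx hz)

lemma inner_lt_one_of_isMinOn {C : Set (E d)} (hCs : C ⊆ Sph d) {p q x y : E d}
    (hp : p ∈ Sph d) (hx : x ∈ C) (hy : y ∈ C) (hxy : x ≠ y) (hmin : IsMinOn (⟪p, ·⟫) C q) :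
    ⟪p, q⟫ < 1 := by
  by_contra! h
  have hCp : ∀ z ∈ C, z = p := fun z hz =>
    ((inner_eq_one_iff_of_norm_eq_one (mem_Sph.1 hp) (mem_Sph.1 (hCs hz))).1
      (le_antisymm (real_inner_le_one_of_norm_eq_one (mem_Sph.1 hp) (mem_Sph.1 (hCs hz)))
        (h.trans (hmin hz)))).symm
  exact hxy ((hCp x hx).trans (hCp y hy).symm)

lemma SphConvex.neg_one_lt_inner {C : Set (E d)} (hC : SphConvex C) (hCs : C ⊆ Sph d)
    {x y : E d} (hx : x ∈ C) (hy : y ∈ C) : -1 < ⟪x, y⟫ := by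
  have hx1 := mem_Sph.1 (hCs hx)
  have hy1 := mem_Sph.1 (hCs hy)
  refine (neg_one_le_real_inner_of_norm_eq_one hx1 hy1).lt_of_ne fun h => hC.1 y hy ?_
  rwa [← (inner_eq_neg_one_iff_of_norm_eq_one hx1 hy1).1 h.symm]

lemma SphConvex.exists_smul_eq_smul_add_smul {C : Set (E d)} (hC : SphConvex C) {x y : E d}
    (hx : x ∈ C) (hy : y ∈ C) {a b : ℝ} (ha : 0 ≤ a) (hb : 0 ≤ b) :
    ∃ r : ℝ, 0 ≤ r ∧ ∃ m ∈ C, a • x + b • y = r • m := by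
  obtain ⟨r, hr, m, hm, h⟩ := hC.2 ⟨2 * a, by positivity, x, hx, rfl⟩
    ⟨2 * b, by positivity, y, hy, rfl⟩ (by norm_num : (0 : ℝ) ≤ 1 / 2)
    (by norm_num : (0 : ℝ) ≤ 1 / 2) (by norm_num)
  exact ⟨r, hr, m, hm, by rw [← h]; module⟩

lemma SphConvex.inner_mul_inner_le {C : Set (E d)} (hC : SphConvex C) (hCs : C ⊆ Sph d)
    {p q z : E d} (hq : q ∈ C) (hz : z ∈ C) (hmin : IsMinOn (⟪p, ·⟫) C q) :
    ⟪p, q⟫ * ⟪q, z⟫ ≤ ⟪p, z⟫ := by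
  have hq1 := mem_Sph.1 (hCs hq)
  have hz1 := mem_Sph.1 (hCs hz)
  -- `q + t z` is a nonnegative multiple of a point of `C`, so `⟪p, q + t z⟫ ≥ ⟪p, q⟫ ‖q + t z‖`;
  -- with `‖q + t z‖² = 1 + 2 t ⟪q, z⟫ + t²` this rearranges to a bound tending to the claim.
  have hbound : ∀ t > 0, ⟪p, q⟫ * (2 * ⟪q, z⟫ + t) / (‖q + t • z‖ + 1) ≤ ⟪p, z⟫ := by
    intro t ht
    obtain ⟨r, hr, m, hm, hqz⟩ := hC.exists_smul_eq_smul_add_smul hq hz zero_le_one ht.le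
    rw [one_smul] at hqz
    have hnorm : ‖q + t • z‖ = r := by
      rw [hqz, norm_smul, mem_Sph.1 (hCs hm), Real.norm_of_nonneg hr, mul_one]
    have hsq : r ^ 2 = 1 + 2 * t * ⟪q, z⟫ + t ^ 2 := by
      rw [← hnorm, ← real_inner_self_eq_norm_sq]
      simp only [inner_add_left, inner_add_right, real_inner_smul_left, real_inner_smul_right,
        inner_self_eq_one_of_norm_eq_one hq1, inner_self_eq_one_of_norm_eq_one hz1,
        real_inner_comm q z]
      ring
    have hpm : r * ⟪p, q⟫ ≤ ⟪p, q⟫ + t * ⟪p, z⟫ := by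
      have h := congrArg (⟪p, ·⟫) hqz
      simp only [inner_add_right, real_inner_smul_right] at h
      rw [h]
      exact mul_le_mul_of_nonneg_left (hmin hm) hr
    rw [hnorm, div_le_iff₀ (by positivity)]
    refine le_of_mul_le_mul_left ?_ ht
    linear_combination mul_le_mul_of_nonneg_right hpm (by positivity : (0 : ℝ) ≤ r + 1) -
      ⟪p, q⟫ * hsq
  have hcont : Continuous fun t : ℝ => ⟪p, q⟫ * (2 * ⟪q, z⟫ + t) / (‖q + t • z‖ + 1) :=
    Continuous.div (by fun_prop) (by fun_prop) fun t => by positivity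
  have hlim := (hcont.tendsto 0).mono_left (nhdsWithin_le_nhds (s := Ioi 0))
  rw [zero_smul, add_zero, add_zero, hq1,
    show ⟪p, q⟫ * (2 * ⟪q, z⟫) / (1 + 1) = ⟪p, q⟫ * ⟪q, z⟫ by ring] at hlim
  exact le_of_tendsto hlim (eventually_nhdsWithin_of_forall fun t ht => hbound t ht)

lemma sqrt_one_sub_sq_pos {c : ℝ} (hc : |c| < 1) : 0 < √(1 - c ^ 2) :=
  sqrt_pos.2 (by nlinarith [abs_nonneg c, sq_abs c])

lemma norm_sub_inner_smul {g h : E d} (hg : g ∈ Sph d) (hh : h ∈ Sph d) :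
    ‖h - ⟪g, h⟫ • g‖ = √(1 - ⟪g, h⟫ ^ 2) := by
  rw [norm_eq_sqrt_real_inner]
  congr 1
  simp only [inner_sub_left, inner_sub_right, real_inner_smul_left, real_inner_smul_right,
    inner_self_eq_one_of_norm_eq_one (mem_Sph.1 hg),
    inner_self_eq_one_of_norm_eq_one (mem_Sph.1 hh), real_inner_comm g h]
  ring

lemma inner_cGH {g h : E d} (hg : g ∈ Sph d) (hh : h ∈ Sph d) (u : E d) :
    ⟪cGH g h, u⟫ = (⟪h, u⟫ - ⟪g, h⟫ * ⟪g, u⟫) / √(1 - ⟪g, h⟫ ^ 2) := by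
  rw [cGH, nrm, real_inner_smul_left, norm_sub_inner_smul hg hh, inner_sub_left,
    real_inner_smul_left, inv_mul_eq_div]

lemma cGH_mem_Sph {g h : E d} (hg : g ∈ Sph d) (hh : h ∈ Sph d) (hgh : |⟪g, h⟫| < 1) :
    cGH g h ∈ Sph d := by
  refine mem_Sph.2 (norm_smul_inv_norm fun h0 => ?_)
  have hpos := sqrt_one_sub_sq_pos hgh
  rw [← norm_sub_inner_smul hg hh, h0, norm_zero] at hpos
  exact lt_irrefl _ hpos

lemma inner_cGH_left {g h : E d} (hg : g ∈ Sph d) (hh : h ∈ Sph d) : ⟪cGH g h, g⟫ = 0 := by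
  rw [inner_cGH hg hh, inner_self_eq_one_of_norm_eq_one (mem_Sph.1 hg), real_inner_comm]
  simp

lemma inner_cGH_right {g h : E d} (hg : g ∈ Sph d) (hh : h ∈ Sph d) :
    ⟪cGH g h, h⟫ = √(1 - ⟪g, h⟫ ^ 2) := by
  rw [inner_cGH hg hh, inner_self_eq_one_of_norm_eq_one (mem_Sph.1 hh), ← sq, div_sqrt]

lemma inner_cGH_cGH {g h : E d} (hg : g ∈ Sph d) (hh : h ∈ Sph d) (hgh : |⟪g, h⟫| < 1) :
    ⟪cGH g h, cGH h g⟫ = -⟪g, h⟫ := by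
  have hpos := sqrt_one_sub_sq_pos hgh
  rw [inner_cGH hg hh, real_inner_comm, inner_cGH_left hh hg, real_inner_comm (cGH h g),
    inner_cGH_right hh hg, real_inner_comm g h]
  field_simp
  ring

lemma exists_inner_cGH_eq_neg_mul {k p q : E d} (hk : k ∈ Sph d) (hp : p ∈ Sph d)
    (hq : q ∈ Sph d) (hpk : ⟪k, p⟫ = 0) (hqk : 0 ≤ ⟪k, q⟫) (hpq : |⟪p, q⟫| < 1) :
    ∃ μ ∈ Icc (0 : ℝ) 1, ⟪k, cGH q p⟫ = -⟪p, q⟫ * μ := by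
  have hs := sqrt_one_sub_sq_pos hpq
  have hqk₁ : ⟪q, k⟫ ≤ √(1 - ⟪p, q⟫ ^ 2) := calc
    ⟪q, k⟫ = ⟪q - ⟪p, q⟫ • p, k⟫ := by
      rw [inner_sub_left, real_inner_smul_left, real_inner_comm k p, hpk, mul_zero, sub_zero]
    _ ≤ ‖q - ⟪p, q⟫ • p‖ * ‖k‖ := real_inner_le_norm _ _
    _ = √(1 - ⟪p, q⟫ ^ 2) := by rw [norm_sub_inner_smul hp hq, mem_Sph.1 hk, mul_one]
  refine ⟨⟪q, k⟫ / √(1 - ⟪p, q⟫ ^ 2),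
    ⟨div_nonneg (real_inner_comm q k ▸ hqk) hs.le, (div_le_one hs).2 hqk₁⟩, ?_⟩
  rw [real_inner_comm, inner_cGH hq hp, real_inner_comm k p, hpk, real_inner_comm p q]
  ring

lemma SphConvex.supports_cGH {C : Set (E d)} (hC : SphConvex C) (hCs : C ⊆ Sph d) {p q : E d}
    (hp : p ∈ Sph d) (hq : q ∈ C) (hmin : IsMinOn (⟪p, ·⟫) C q) : Supports (cGH q p) C := by
  refine ⟨fun z hz => ⟨hCs hz, ?_⟩, q, ⟨hCs hq, inner_cGH_left (hCs hq) hp⟩, hq⟩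
  rw [inner_cGH (hCs hq) hp, real_inner_comm p q]
  exact div_nonneg (sub_nonneg.2 (hC.inner_mul_inner_le hCs hq hz hmin)) (sqrt_nonneg _)

lemma width_le_lthick {C : Set (E d)} {k k' : E d} (hk' : k' ∈ Sph d) (hne : k' ≠ k)
    (hne' : k' ≠ -k) (hk'C : Supports k' C) : width C k ≤ lthick k k' :=
  csInf_le ⟨0, by rintro _ ⟨_, -, -, -, -, rfl⟩; exact lthick_nonneg _ _⟩
    ⟨k', hk', hne, hne', hk'C, rfl⟩

lemma thick_le_lthick {C : Set (E d)} {g h : E d} (hg : g ∈ Sph d) (hh : h ∈ Sph d)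
    (hne : g ≠ h) (hne' : g ≠ -h) (hC : C ⊆ Hemi g ∩ Hemi h) : thick C ≤ lthick g h :=
  csInf_le ⟨0, by rintro _ ⟨_, -, _, -, -, -, -, rfl⟩; exact lthick_nonneg _ _⟩
    ⟨g, hg, h, hh, hne, hne', hC, rfl⟩

lemma eq_or_eq_neg_of_mem_Sph_zero {g h : E 0} (hg : g ∈ Sph 0) (hh : h ∈ Sph 0) :
    g = h ∨ g = -h := by
  have hnorm (x : E 0) : ‖x‖ = |x 0| := by simp [EuclideanSpace.norm_eq, sqrt_sq_eq_abs]
  rcases abs_eq_abs.1 (((hnorm g).symm.trans (mem_Sph.1 hg)).trans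
    ((mem_Sph.1 hh).symm.trans (hnorm h))) with h0 | h0
  · exact .inl (by ext i; fin_cases i; exact h0)
  · exact .inr (by ext i; fin_cases i; exact h0)

lemma thick_of_dim_zero (C : Set (E 0)) : thick C = 0 := by
  rw [thick]
  convert Real.sInf_empty
  refine eq_empty_of_forall_notMem ?_
  rintro _ ⟨g, hg, h, hh, hne, hne', -⟩
  exact (eq_or_eq_neg_of_mem_Sph_zero hg hh).elim hne hne'

lemma IsBody.isCompact {C : Set (E d)} (hC : IsBody C) : IsCompact C :=
  (isCompact_sphere 0 1).of_isClosed_subset hC.2.1 hC.1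

lemma IsBody.nonempty {C : Set (E d)} (hC : IsBody C) : C.Nonempty :=
  let ⟨x, hx, _, hε, hball⟩ := hC.2.2.2
  ⟨x, hball ⟨mem_ball_self hε, hx⟩⟩

lemma IsBody.exists_ne {C : Set (E d)} (hC : IsBody C) (hd : 0 < d) :
    ∃ x ∈ C, ∃ y ∈ C, x ≠ y := by
  obtain ⟨-, -, hconv, x, hx, ε, hε, hball⟩ := hC
  have hxC : x ∈ C := hball ⟨mem_ball_self hε, hx⟩
  by_contra! hsing
  have hrank : 1 < Module.rank ℝ (E d) := by
    rw [← Module.finrank_eq_rank, finrank_euclideanSpace_fin]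
    exact_mod_cast (by omega : 1 < d + 1)
  -- otherwise `x` would be an isolated point of the connected sphere
  rcases isPreconnected_iff_subset_of_disjoint.1 (isPreconnected_sphere hrank 0 1) (ball x ε) {x}ᶜ
    isOpen_ball isOpen_compl_singleton
    (fun y _ => (eq_or_ne y x).elim (fun h => .inl (h ▸ mem_ball_self hε)) .inr)
    (eq_empty_of_forall_notMem fun y ⟨hy, hyb, hyx⟩ => hyx (hsing y (hball ⟨hyb, hy⟩) x hxC))
    with hS | hS
  · exact hconv.1 x hxC (hball ⟨hS (neg_mem_Sph hx), neg_mem_Sph hx⟩)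
  · exact hS hx rfl

lemma IsBody.sdiam_pos {C : Set (E d)} (hC : IsBody C) (hd : 0 < d) : 0 < sdiam C := by
  obtain ⟨x, hx, y, hy, hxy⟩ := hC.exists_ne hd
  exact (arccos_pos.2 ((inner_lt_one_iff_real_of_norm_eq_one (mem_Sph.1 (hC.1 hx))
    (mem_Sph.1 (hC.1 hy))).2 hxy)).trans_le (sdist_le_sdiam hx hy)

theorem width_le_sdiam {C : Set (E d)} (hC : IsBody C) (hδ : π / 2 < sdiam C) {k : E d}
    (hk : k ∈ Sph d) (hkC : Supports k C) : width C k ≤ sdiam C := by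
  have hCs := hC.1
  obtain ⟨p, ⟨hp, hpk⟩, hpC⟩ := hkC.2
  obtain ⟨q, hq, hmin⟩ := hC.isCompact.exists_isMinOn hC.nonempty
    (continuous_const.inner continuous_id : Continuous (⟪p, ·⟫)).continuousOn
  obtain ⟨x, hx, y, hy, hxy⟩ := hC.isCompact.exists_sdist_eq_sdiam hC.nonempty
  have hxy' : x ≠ y := (inner_lt_one_iff_real_of_norm_eq_one (mem_Sph.1 (hCs hx))
    (mem_Sph.1 (hCs hy))).1 (arccos_pos.1 (by rw [← sdist, hxy]; linarith [pi_pos]))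
  have hc : |⟪p, q⟫| < 1 :=
    abs_lt.2 ⟨hC.2.2.1.neg_one_lt_inner hCs hpC hq, inner_lt_one_of_isMinOn hCs hp hx hy hxy' hmin⟩
  obtain ⟨μ, ⟨hμ₀, hμ₁⟩, hkk'⟩ := exists_inner_cGH_eq_neg_mul hk hp (hCs hq) hpk (hkC.1 hq).2 hc
  have hcos : cos (sdiam C) ≤ ⟪p, q⟫ := by
    rw [← cos_sdist hp (hCs hq)]
    exact cos_le_cos_of_nonneg_of_le_pi (arccos_nonneg _) (sdiam_le_pi C) (sdist_le_sdiam hpC hq)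
  have hcos₀ : cos (sdiam C) ≤ 0 :=
    cos_nonpos_of_pi_div_two_le_of_le hδ.le (by linarith [sdiam_le_pi C, pi_pos])
  obtain ⟨hne, hne'⟩ := ne_and_ne_neg_of_abs_inner_lt_one hk (k' := cGH q p) (by
    rw [hkk', abs_mul, abs_neg, abs_of_nonneg hμ₀]
    exact (mul_le_of_le_one_right (abs_nonneg _) hμ₁).trans_lt hc)
  calc width C k ≤ lthick k (cGH q p) :=
        width_le_lthick (cGH_mem_Sph (hCs hq) hp (real_inner_comm p q ▸ hc)) hne hne'
          (hC.2.2.1.supports_cGH hCs hp hq hmin)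
    _ ≤ sdiam C := lthick_le_of_inner_le_neg_cos (sdiam_nonneg C) (sdiam_le_pi C) (by
        rw [hkk']
        rcases le_total 0 ⟪p, q⟫ with h | h <;> nlinarith)

theorem thick_le_sdiam {C : Set (E d)} (hC : IsBody C) : thick C ≤ sdiam C := by
  rcases Nat.eq_zero_or_pos d with rfl | hd
  · rw [thick_of_dim_zero]
    exact sdiam_nonneg C
  have hCs := hC.1
  have hconv := hC.2.2.1
  obtain ⟨x, hx, y, hy, hxy⟩ := hC.isCompact.exists_sdist_eq_sdiam hC.nonempty
  have hc : |⟪x, y⟫| < 1 := abs_lt.2 ⟨hconv.neg_one_lt_inner hCs hx hy,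
    arccos_pos.1 (by rw [← sdist, hxy]; exact hC.sdiam_pos hd)⟩
  have hc' : |⟪y, x⟫| < 1 := real_inner_comm x y ▸ hc
  have hg := hconv.supports_cGH hCs (hCs hx) hy (isMinOn_inner_of_sdist_eq_sdiam hCs hx hy hxy)
  have hh := hconv.supports_cGH hCs (hCs hy) hx
    (isMinOn_inner_of_sdist_eq_sdiam hCs hy hx (sdist_comm x y ▸ hxy))
  have hgh : ⟪cGH y x, cGH x y⟫ = -⟪x, y⟫ := by
    rw [inner_cGH_cGH (hCs hy) (hCs hx) hc', real_inner_comm]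
  obtain ⟨hne, hne'⟩ := ne_and_ne_neg_of_abs_inner_lt_one (cGH_mem_Sph (hCs hx) (hCs hy) hc)
    (k' := cGH y x) (by rwa [real_inner_comm, hgh, abs_neg])
  calc thick C ≤ lthick (cGH y x) (cGH x y) :=
        thick_le_lthick (cGH_mem_Sph (hCs hy) (hCs hx) hc') (cGH_mem_Sph (hCs hx) (hCs hy) hc)
          hne hne' fun z hz => ⟨hg.1 hz, hh.1 hz⟩
    _ ≤ sdiam C := lthick_le_of_inner_le_neg_cos (sdiam_nonneg C) (sdiam_le_pi C)
        (by rw [hgh, ← hxy, cos_sdist (hCs hx) (hCs hy)])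

/-- for a convex body of diameter greater than `π/2` all widths
are at most the diameter; consequently `Δ(C) ≤ diam(C)` for every convex body. -/
theorem stmt15 {d : ℕ} (C : Set (E d)) (hC : IsBody C) :
    (Real.pi / 2 < sdiam C →
      sSup {w | ∃ k ∈ Sph d, Supports k C ∧ w = width C k} ≤ sdiam C) ∧
    thick C ≤ sdiam C :=
  ⟨fun hδ => Real.sSup_le (by rintro _ ⟨k, hk, hkC, rfl⟩; exact width_le_sdiam hC hδ hk hkC)
    (sdiam_nonneg C), thick_le_sdiam hC⟩
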